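/- arXiv:2208.09223 — 2 statements merged into one kernel-verified Lean document; each statement's English description precedes it below -/
import Mathlib

section
/- Let X be the graph obtained from a d-periodic graph K by taking n₁ × ⋯ × n_d copies of a unit cell with periodic boundary conditions, i.e. X = K / ⟨n₁t₁, …, n_d t_d⟩. If the weighted quotient graph q(K) is connected with weight subgroup W ≤ ℤ^d, then β₀(X) = [ℤ^d / L : (W + L)/L], where L = n₁ℤ × ⋯ × n_dℤ; equivalently β₀(X) equals the cardinality of the quotient group ℤ^d / (W + L). -/
/-- Corollary (β₀ with periodic boundary conditions): let `K` be a `d`-periodic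
graph (modelled on `(Fin d → ℤ) × ι` with translation-invariant adjacency) with
connected weighted quotient graph and loop-weight subgroup `W ≤ ℤ^d`.  Let
`X = K/⟨n₁t₁,…,n_d t_d⟩` be the graph on `(∀ i, ZMod (n i)) × ι` obtained by
reducing translations modulo `L = n₁ℤ × ⋯ × n_dℤ`.  Then the number of
connected components of `X` is `β₀(X) = [ℤ^d : W + L] = |ℤ^d/(W+L)|`. -/
theorem periodic_boundary_betti_zero {d : ℕ} {ι : Type*}
    (n : Fin d → ℕ) (hn : ∀ i, 0 < n i)
    (G : SimpleGraph ((Fin d → ℤ) × ι))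
    (hinv : ∀ (t : Fin d → ℤ) (a b : (Fin d → ℤ) × ι),
      G.Adj a b ↔ G.Adj (t + a.1, a.2) (t + b.1, b.2))
    (hquot_conn : ∀ i j : ι,
      Relation.ReflTransGen (fun x y : ι => ∃ t s : Fin d → ℤ, G.Adj (t, x) (s, y)) i j)
    (v : ι) (W L : AddSubgroup (Fin d → ℤ))
    (hW : W = AddSubgroup.closure {t : Fin d → ℤ | G.Reachable (0, v) (t, v)})
    (hL : L = AddSubgroup.closure (Set.range fun i : Fin d => Pi.single i (n i : ℤ)))
    (X : SimpleGraph ((∀ i : Fin d, ZMod (n i)) × ι))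
    (hX : X = SimpleGraph.fromRel (fun a b => ∃ t s : Fin d → ℤ,
      (∀ i, (t i : ZMod (n i)) = a.1 i) ∧ (∀ i, (s i : ZMod (n i)) = b.1 i) ∧
      G.Adj (t, a.2) (s, b.2))) :
    Nat.card X.ConnectedComponent = (W ⊔ L).index := by
  classical
  haveI : ∀ i, NeZero (n i) := fun i => ⟨(hn i).ne'⟩
  -- reduction map ℤ^d → ∏ ZMod (n i), and integer lift
  set red : (Fin d → ℤ) → (∀ i, ZMod (n i)) := fun u i => (u i : ZMod (n i)) with hred
  set liftZ : (∀ i, ZMod (n i)) → (Fin d → ℤ) := fun a i => ((a i).val : ℤ) with hliftZdef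
  have hliftZ : ∀ (a : ∀ i, ZMod (n i)) (i : Fin d), ((liftZ a i : ℤ) : ZMod (n i)) = a i := by
    intro a i
    simp only [hliftZdef, Int.cast_natCast]
    exact ZMod.natCast_rightInverse (a i)
  -- translation invariance of reachability
  have htrans : ∀ (u t s : Fin d → ℤ) (x y : ι), G.Reachable (t, x) (s, y) →
      G.Reachable (u + t, x) (u + s, y) := by
    intro u t s x y h
    rw [SimpleGraph.reachable_iff_reflTransGen] at h ⊢
    have : ∀ (a b : (Fin d → ℤ) × ι), Relation.ReflTransGen G.Adj a b →
        Relation.ReflTransGen G.Adj (u + a.1, a.2) (u + b.1, b.2) := by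
      intro a b h
      induction h with
      | refl => exact .refl
      | tail _ hadj ih => exact .tail ih ((hinv u _ _).mp hadj)
    exact this (t, x) (s, y) h
  -- choice of connecting translations
  have hex : ∀ x : ι, ∃ t : Fin d → ℤ, G.Reachable (0, v) (t, x) := by
    intro x
    have h := hquot_conn v x
    induction h with
    | refl => exact ⟨0, SimpleGraph.Reachable.refl _⟩
    | tail _ hadj ih =>
        obtain ⟨t, ht⟩ := ih
        obtain ⟨p, q, hpq⟩ := hadj
        have h2 := htrans (t - p) p q _ _ hpq.reachable
        rw [show t - p + p = t from by abel] at h2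
        exact ⟨t - p + q, ht.trans h2⟩
  choose tx htx using hex
  -- W is exactly the set of weights of loops at v
  have hWmem : ∀ t : Fin d → ℤ, t ∈ W ↔ G.Reachable (0, v) (t, v) := by
    have hzero : G.Reachable ((0 : Fin d → ℤ), v) (0, v) := SimpleGraph.Reachable.refl _
    have hadd : ∀ {a b : Fin d → ℤ}, G.Reachable (0, v) (a, v) → G.Reachable (0, v) (b, v) →
        G.Reachable (0, v) (a + b, v) := by
      intro a b ha hb
      have := htrans a 0 b v v hb
      rw [add_zero] at this
      exact ha.trans this
    have hneg : ∀ {a : Fin d → ℤ}, G.Reachable (0, v) (a, v) → G.Reachable (0, v) (-a, v) := by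
      intro a ha
      have := htrans (-a) 0 a v v ha
      rw [add_zero, neg_add_cancel] at this
      exact this.symm
    let W' : AddSubgroup (Fin d → ℤ) :=
      { carrier := {t | G.Reachable (0, v) (t, v)}
        zero_mem' := hzero
        add_mem' := fun ha hb => hadd ha hb
        neg_mem' := fun ha => hneg ha }
    have hWW : W = W' := by
      rw [hW]
      apply le_antisymm
      · exact (AddSubgroup.closure_le _).mpr (fun t ht => ht)
      · exact fun t ht => AddSubgroup.subset_closure ht
    intro t
    rw [hWW]
    exact Iff.rfl
  -- L is exactly the kernel of reduction
  have hLmem : ∀ u : Fin d → ℤ, u ∈ L ↔ ∀ i, ((u i : ℤ) : ZMod (n i)) = 0 := by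
    intro u
    constructor
    · intro hu
      let φ : (Fin d → ℤ) →+ (∀ i, ZMod (n i)) :=
        { toFun := fun u i => ((u i : ℤ) : ZMod (n i))
          map_zero' := by funext i; simp
          map_add' := by intro a b; funext i; push_cast; simp }
      have hφ : ∀ (w : Fin d → ℤ) (j : Fin d), φ w j = ((w j : ℤ) : ZMod (n j)) :=
        fun _ _ => rfl
      have hle : L ≤ φ.ker := by
        rw [hL]
        apply (AddSubgroup.closure_le _).mpr
        rintro _ ⟨i, rfl⟩
        show Pi.single i (n i : ℤ) ∈ φ.ker
        rw [AddMonoidHom.mem_ker]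
        funext j
        rw [hφ, Pi.zero_apply]
        rcases eq_or_ne j i with h | h
        · subst h; rw [Pi.single_eq_same]; simp
        · rw [Pi.single_eq_of_ne h]; simp
      intro i
      have := congrFun (hle hu) i
      rw [hφ] at this
      exact this
    · intro h
      have heq : u = ∑ i : Fin d, (u i / (n i : ℤ)) • Pi.single i (n i : ℤ) := by
        funext j
        rw [Finset.sum_apply]
        simp only [Pi.smul_apply, Pi.single_apply, smul_eq_mul, mul_ite, mul_zero]
        rw [Finset.sum_ite_eq Finset.univ j (fun i => u i / (n i : ℤ) * (n i : ℤ))]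
        simp only [Finset.mem_univ, if_true]
        exact (Int.ediv_mul_cancel ((ZMod.intCast_zmod_eq_zero_iff_dvd (u j) (n j)).mp (h j))).symm
      rw [heq, hL]
      exact sum_mem (fun i _ =>
        AddSubgroup.zsmul_mem _ (AddSubgroup.subset_closure (Set.mem_range_self i)) _)
  -- projection of reachability from K to X
  have hproj : ∀ (t s : Fin d → ℤ) (x y : ι), G.Reachable (t, x) (s, y) →
      X.Reachable (red t, x) (red s, y) := by
    intro t s x y h
    rw [SimpleGraph.reachable_iff_reflTransGen] at h
    have : ∀ (a b : (Fin d → ℤ) × ι), Relation.ReflTransGen G.Adj a b →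
        X.Reachable (red a.1, a.2) (red b.1, b.2) := by
      intro a b h
      induction h with
      | refl => exact SimpleGraph.Reachable.refl _
      | @tail b c _ hadj ih =>
          refine ih.trans ?_
          rcases eq_or_ne ((red b.1, b.2) : (∀ i, ZMod (n i)) × ι) (red c.1, c.2) with he | he
          · rw [he]
          · refine SimpleGraph.Adj.reachable ?_
            rw [hX, SimpleGraph.fromRel_adj]
            exact ⟨he, Or.inl ⟨b.1, c.1, fun i => rfl, fun i => rfl, by simpa using hadj⟩⟩
    exact this (t, x) (s, y) h
  -- the subgroup of translations acting trivially on X-components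
  let Z : AddSubgroup (Fin d → ℤ) :=
    { carrier := {z | ∀ u : Fin d → ℤ, X.Reachable (red u, v) (red (u + z), v)}
      zero_mem' := by intro u; rw [add_zero]
      add_mem' := by
        intro a b ha hb u
        have h2 := hb (u + a)
        rw [add_assoc] at h2
        exact (ha u).trans h2
      neg_mem' := by
        intro a ha u
        have := ha (u + -a)
        rw [show u + -a + a = u from by abel] at this
        exact this.symm }
  have hZW : W ≤ Z := by
    intro z hz u
    have h1 : G.Reachable (0, v) (z, v) := (hWmem z).mp hz
    have h2 := htrans u 0 z v v h1
    rw [add_zero] at h2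
    exact hproj _ _ _ _ h2
  have hZL : L ≤ Z := by
    intro z hz u
    have : red (u + z) = red u := by
      funext i
      show (((u + z) i : ℤ) : ZMod (n i)) = ((u i : ℤ) : ZMod (n i))
      rw [Pi.add_apply, Int.cast_add, (hLmem z).mp hz i, add_zero]
    rw [this]
  have hZsup : W ⊔ L ≤ Z := sup_le hZW hZL
  -- loop-weight of an edge
  have key : ∀ (x y : ι) (t s : Fin d → ℤ), G.Adj (t, x) (s, y) →
      (t - tx x) - (s - tx y) ∈ W := by
    intro x y t s hadj
    rw [hWmem]
    have h1 := htrans (t - tx x) 0 (tx x) v x (htx x)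
    rw [add_zero, sub_add_cancel] at h1
    have h2 := htrans (s - tx y) 0 (tx y) v y (htx y)
    rw [add_zero, sub_add_cancel] at h2
    have h3 : G.Reachable (t - tx x, v) (s - tx y, v) :=
      (h1.trans hadj.reachable).trans h2.symm
    have h4 := htrans (-(s - tx y)) _ _ _ _ h3
    rw [show -(s - tx y) + (t - tx x) = t - tx x - (s - tx y) from by abel,
        neg_add_cancel] at h4
    exact h4.symm
  -- the classifying map
  set F : ((∀ i, ZMod (n i)) × ι) → (Fin d → ℤ) ⧸ (W ⊔ L) :=
    fun p => QuotientAddGroup.mk (liftZ p.1 - tx p.2) with hF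
  have hLlift : ∀ (a : ∀ i, ZMod (n i)) (t : Fin d → ℤ),
      (∀ i, ((t i : ℤ) : ZMod (n i)) = a i) → liftZ a - t ∈ L := by
    intro a t ht
    rw [hLmem]
    intro i
    show (((liftZ a - t) i : ℤ) : ZMod (n i)) = 0
    rw [Pi.sub_apply, Int.cast_sub, hliftZ a i, ht i, sub_self]
  have hrel : ∀ a b : (∀ i, ZMod (n i)) × ι,
      (∃ t s : Fin d → ℤ, (∀ i, (t i : ZMod (n i)) = a.1 i) ∧
        (∀ i, (s i : ZMod (n i)) = b.1 i) ∧ G.Adj (t, a.2) (s, b.2)) → F a = F b := by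
    rintro a b ⟨t, s, hta, hsb, hadj⟩
    apply (QuotientAddGroup.eq).mpr
    have hw : (s - tx b.2) - (t - tx a.2) ∈ W := by
      have h1 := neg_mem (key a.2 b.2 t s hadj)
      rwa [neg_sub] at h1
    have hl1 : liftZ a.1 - t ∈ L := hLlift a.1 t hta
    have hl2 : liftZ b.1 - s ∈ L := hLlift b.1 s hsb
    have hsplit : -(liftZ a.1 - tx a.2) + (liftZ b.1 - tx b.2)
        = ((liftZ b.1 - s) - (liftZ a.1 - t)) + ((s - tx b.2) - (t - tx a.2)) := by abel
    rw [hsplit]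
    exact add_mem (AddSubgroup.mem_sup_right (sub_mem hl2 hl1)) (AddSubgroup.mem_sup_left hw)
  have hFadj : ∀ a b, X.Adj a b → F a = F b := by
    intro a b hab
    rw [hX, SimpleGraph.fromRel_adj] at hab
    obtain ⟨-, h | h⟩ := hab
    · exact hrel a b h
    · exact (hrel b a h).symm
  have hFreach : ∀ a b, X.Reachable a b → F a = F b := by
    intro a b h
    rw [SimpleGraph.reachable_iff_reflTransGen] at h
    induction h with
    | refl => rfl
    | tail _ hadj ih => exact ih.trans (hFadj _ _ hadj)
  set F' : X.ConnectedComponent → (Fin d → ℤ) ⧸ (W ⊔ L) :=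
    SimpleGraph.ConnectedComponent.lift F (fun a b p _ => hFreach a b ⟨p⟩) with hF'
  have hsurj : Function.Surjective F' := by
    intro q
    induction q using QuotientAddGroup.induction_on with
    | H u =>
      refine ⟨X.connectedComponentMk (red (u + tx v), v), ?_⟩
      show F (red (u + tx v), v) = QuotientAddGroup.mk u
      apply (QuotientAddGroup.eq).mpr
      have hl : liftZ (red (u + tx v)) - (u + tx v) ∈ L := by
        apply hLlift
        intro i
        rfl
      have : -(liftZ (red (u + tx v)) - tx v) + u
          = -(liftZ (red (u + tx v)) - (u + tx v)) := by abel
      rw [this]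
      exact AddSubgroup.mem_sup_right (neg_mem hl)
  have hinj : Function.Injective F' := by
    intro c1 c2
    induction c1 using SimpleGraph.ConnectedComponent.ind with
    | _ a =>
    induction c2 using SimpleGraph.ConnectedComponent.ind with
    | _ b =>
    intro h
    have h' : F a = F b := h
    have hz : -(liftZ a.1 - tx a.2) + (liftZ b.1 - tx b.2) ∈ W ⊔ L :=
      (QuotientAddGroup.eq).mp h'
    apply SimpleGraph.ConnectedComponent.sound
    have r1 : X.Reachable (red (liftZ a.1 - tx a.2), v) a := by
      have h1 := htrans (liftZ a.1 - tx a.2) 0 (tx a.2) v a.2 (htx a.2)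
      rw [add_zero, sub_add_cancel] at h1
      have h2 := hproj _ _ _ _ h1
      have h3 : red (liftZ a.1) = a.1 := funext (hliftZ a.1)
      rw [h3] at h2
      exact h2
    have r2 : X.Reachable (red (liftZ b.1 - tx b.2), v) b := by
      have h1 := htrans (liftZ b.1 - tx b.2) 0 (tx b.2) v b.2 (htx b.2)
      rw [add_zero, sub_add_cancel] at h1
      have h2 := hproj _ _ _ _ h1
      have h3 : red (liftZ b.1) = b.1 := funext (hliftZ b.1)
      rw [h3] at h2
      exact h2
    have hmid := hZsup hz (liftZ a.1 - tx a.2)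
    rw [show liftZ a.1 - tx a.2 + (-(liftZ a.1 - tx a.2) + (liftZ b.1 - tx b.2))
        = liftZ b.1 - tx b.2 from by abel] at hmid
    exact (r1.symm.trans hmid).trans r2
  have hcard : Nat.card X.ConnectedComponent = Nat.card ((Fin d → ℤ) ⧸ (W ⊔ L)) :=
    Nat.card_eq_of_bijective F' ⟨hinj, hsurj⟩
  rw [hcard]
  rfl
end

section
/- Let W ≤ ℤ³ be generated by (1,−1,0), (1,1,−1), (0,0,1), and for positive integers n₁,n₂,n₃ let L = n₁ℤ × n₂ℤ × n₃ℤ. Then the cardinality of ℤ³/(W+L) equals (3 + (−1)^{n₁+n₂+n₁n₂})/2, i.e., it equals 2 when (−1)^{n₁+n₂+n₁n₂} = 1 and 1 when (−1)^{n₁+n₂+n₁n₂} = −1. -/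
private def phi3 : (Fin 3 → ℤ) →+ ZMod 2 where
  toFun v := ((v 0 + v 1 : ℤ) : ZMod 2)
  map_zero' := by simp
  map_add' a b := by
    simp only [Pi.add_apply]
    push_cast
    ring

private lemma mem_of_basis {H : AddSubgroup (Fin 3 → ℤ)}
    (h0 : (![1, 0, 0] : Fin 3 → ℤ) ∈ H) (h1 : (![0, 1, 0] : Fin 3 → ℤ) ∈ H)
    (h2 : (![0, 0, 1] : Fin 3 → ℤ) ∈ H) (v : Fin 3 → ℤ) : v ∈ H := by
  have hv : v = v 0 • ![1, 0, 0] + v 1 • ![0, 1, 0] + v 2 • ![0, 0, 1] := by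
    funext i; fin_cases i <;> simp
  rw [hv]
  exact add_mem (add_mem (AddSubgroup.zsmul_mem H h0 _) (AddSubgroup.zsmul_mem H h1 _))
    (AddSubgroup.zsmul_mem H h2 _)

private lemma W_eq_ker :
    AddSubgroup.closure {(![1, -1, 0] : Fin 3 → ℤ), ![1, 1, -1], ![0, 0, 1]} = phi3.ker := by
  apply le_antisymm
  · rw [AddSubgroup.closure_le]
    rintro x (rfl | rfl | rfl) <;> simp [phi3, AddMonoidHom.mem_ker] <;> decide
  · intro v hv
    have hdvd : (2 : ℤ) ∣ v 0 + v 1 := by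
      have : ((v 0 + v 1 : ℤ) : ZMod 2) = 0 := hv
      exact_mod_cast (ZMod.intCast_zmod_eq_zero_iff_dvd _ 2).mp this
    obtain ⟨k, hk⟩ := hdvd
    have hg1 : (![1, -1, 0] : Fin 3 → ℤ) ∈
        AddSubgroup.closure {(![1, -1, 0] : Fin 3 → ℤ), ![1, 1, -1], ![0, 0, 1]} :=
      AddSubgroup.subset_closure (by simp)
    have hg2 : (![1, 1, -1] : Fin 3 → ℤ) ∈
        AddSubgroup.closure {(![1, -1, 0] : Fin 3 → ℤ), ![1, 1, -1], ![0, 0, 1]} :=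
      AddSubgroup.subset_closure (by simp)
    have hg3 : (![0, 0, 1] : Fin 3 → ℤ) ∈
        AddSubgroup.closure {(![1, -1, 0] : Fin 3 → ℤ), ![1, 1, -1], ![0, 0, 1]} :=
      AddSubgroup.subset_closure (by simp)
    have hg4 : (![1, 1, 0] : Fin 3 → ℤ) ∈
        AddSubgroup.closure {(![1, -1, 0] : Fin 3 → ℤ), ![1, 1, -1], ![0, 0, 1]} := by
      have := add_mem hg2 hg3
      have he : (![1, 1, -1] : Fin 3 → ℤ) + ![0, 0, 1] = ![1, 1, 0] := by
        funext i; fin_cases i <;> simp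
      rwa [he] at this
    have hv2 : v = (k - v 1) • ![1, -1, 0] + k • ![1, 1, 0] + v 2 • ![0, 0, 1] := by
      funext i; fin_cases i <;> simp <;> omega
    rw [hv2]
    exact add_mem (add_mem (AddSubgroup.zsmul_mem _ hg1 _) (AddSubgroup.zsmul_mem _ hg4 _))
      (AddSubgroup.zsmul_mem _ hg3 _)

/-- With `W ≤ ℤ³` generated by `(1,−1,0)`, `(1,1,−1)`, `(0,0,1)` and
`L = n₁ℤ × n₂ℤ × n₃ℤ` (generated by `n₁e₁`, `n₂e₂`, `n₃e₃`), the cardinality of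
`ℤ³/(W+L)`, i.e. the index of `W ⊔ L`, equals `(3 + (−1)^{n₁+n₂+n₁n₂})/2`,
which is 2 when `(−1)^{n₁+n₂+n₁n₂} = 1` and 1 when it equals `−1`. -/
theorem interwoven_lattice_pbc_betti_zero
    (n₁ n₂ n₃ : ℕ) (h₁ : 0 < n₁) (h₂ : 0 < n₂) (h₃ : 0 < n₃)
    (W L : AddSubgroup (Fin 3 → ℤ))
    (hW : W = AddSubgroup.closure
      {(![1, -1, 0] : Fin 3 → ℤ), ![1, 1, -1], ![0, 0, 1]})
    (hL : L = AddSubgroup.closure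
      {(![(n₁ : ℤ), 0, 0] : Fin 3 → ℤ), ![0, (n₂ : ℤ), 0], ![0, 0, (n₃ : ℤ)]}) :
    ((W ⊔ L).index : ℤ) = (3 + (-1 : ℤ) ^ (n₁ + n₂ + n₁ * n₂)) / 2 := by
  have hWker : W = phi3.ker := by rw [hW]; exact W_eq_ker
  -- basic W members
  have hg1 : (![1, -1, 0] : Fin 3 → ℤ) ∈ W := by
    rw [hW]; exact AddSubgroup.subset_closure (by simp)
  have hg3 : (![0, 0, 1] : Fin 3 → ℤ) ∈ W := by
    rw [hW]; exact AddSubgroup.subset_closure (by simp)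
  have hg4 : (![1, 1, 0] : Fin 3 → ℤ) ∈ W := by
    rw [hW]
    have hg2 : (![1, 1, -1] : Fin 3 → ℤ) ∈ AddSubgroup.closure
        {(![1, -1, 0] : Fin 3 → ℤ), ![1, 1, -1], ![0, 0, 1]} :=
      AddSubgroup.subset_closure (by simp)
    have hg3' : (![0, 0, 1] : Fin 3 → ℤ) ∈ AddSubgroup.closure
        {(![1, -1, 0] : Fin 3 → ℤ), ![1, 1, -1], ![0, 0, 1]} :=
      AddSubgroup.subset_closure (by simp)
    have := add_mem hg2 hg3'
    have he : (![1, 1, -1] : Fin 3 → ℤ) + ![0, 0, 1] = ![1, 1, 0] := by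
      funext i; fin_cases i <;> simp
    rwa [he] at this
  have hLn₁ : (![(n₁ : ℤ), 0, 0] : Fin 3 → ℤ) ∈ L := by
    rw [hL]; exact AddSubgroup.subset_closure (by simp)
  have hLn₂ : (![0, (n₂ : ℤ), 0] : Fin 3 → ℤ) ∈ L := by
    rw [hL]; exact AddSubgroup.subset_closure (by simp)
  by_cases hcase : Even n₁ ∧ Even n₂
  · -- index 2
    have hsup : W ⊔ L = phi3.ker := by
      apply le_antisymm
      · apply sup_le (le_of_eq hWker)
        rw [hL, AddSubgroup.closure_le]
        rintro x (rfl | rfl | rfl) <;>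
          simp only [Set.mem_setOf_eq, SetLike.mem_coe, AddMonoidHom.mem_ker, phi3,
            AddMonoidHom.coe_mk, ZeroHom.coe_mk] <;> simp
        · obtain ⟨m, hm⟩ := hcase.1
          have h2 : (2 : ZMod 2) = 0 := by decide
          rw [hm]; push_cast; rw [← two_mul, h2, zero_mul]
        · obtain ⟨m, hm⟩ := hcase.2
          have h2 : (2 : ZMod 2) = 0 := by decide
          rw [hm]; push_cast; rw [← two_mul, h2, zero_mul]
      · rw [← hWker]; exact le_sup_left
    have hidx : (W ⊔ L).index = 2 := by
      rw [hsup, AddSubgroup.index_ker]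
      have hsurj : Function.Surjective phi3 := by
        intro x
        fin_cases x
        · exact ⟨![0, 0, 0], by simp [phi3]; rfl⟩
        · exact ⟨![1, 0, 0], by simp [phi3]; rfl⟩
      rw [AddMonoidHom.range_eq_top_of_surjective phi3 hsurj, AddSubgroup.card_top,
        Nat.card_eq_fintype_card, ZMod.card]
    have heven : Even (n₁ + n₂ + n₁ * n₂) :=
      Even.add (Even.add hcase.1 hcase.2) (hcase.1.mul_right _)
    rw [hidx, heven.neg_one_pow]
    norm_num
  · -- index 1
    have he0 : (![1, 0, 0] : Fin 3 → ℤ) ∈ W ⊔ L ∧ (![0, 1, 0] : Fin 3 → ℤ) ∈ W ⊔ L := by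
      have h2e0 : (![2, 0, 0] : Fin 3 → ℤ) ∈ W := by
        have := add_mem hg1 hg4
        have he : (![1, -1, 0] : Fin 3 → ℤ) + ![1, 1, 0] = ![2, 0, 0] := by
          funext i; fin_cases i <;> simp
        rwa [he] at this
      have h2e1 : (![0, 2, 0] : Fin 3 → ℤ) ∈ W := by
        have := sub_mem hg4 hg1
        have he : (![1, 1, 0] : Fin 3 → ℤ) - ![1, -1, 0] = ![0, 2, 0] := by
          funext i; fin_cases i <;> simp
        rwa [he] at this
      rcases Nat.even_or_odd n₁ with hpar | hpar
      · have hn₂ : Odd n₂ := by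
          rcases Nat.even_or_odd n₂ with h | h
          · exact absurd ⟨hpar, h⟩ hcase
          · exact h
        obtain ⟨k, hk⟩ := hn₂
        have he1 : (![0, 1, 0] : Fin 3 → ℤ) ∈ W ⊔ L := by
          have hv : (![0, 1, 0] : Fin 3 → ℤ) = ![0, (n₂ : ℤ), 0] - (k : ℤ) • ![0, 2, 0] := by
            funext i; fin_cases i <;> simp <;> push_cast <;> omega
          rw [hv]
          exact sub_mem (AddSubgroup.mem_sup_right hLn₂)
            (AddSubgroup.zsmul_mem _ (AddSubgroup.mem_sup_left h2e1) _)
        refine ⟨?_, he1⟩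
        have hv : (![1, 0, 0] : Fin 3 → ℤ) = ![1, 1, 0] - ![0, 1, 0] := by
          funext i; fin_cases i <;> simp
        rw [hv]
        exact sub_mem (AddSubgroup.mem_sup_left hg4) he1
      · obtain ⟨k, hk⟩ := hpar
        have he0 : (![1, 0, 0] : Fin 3 → ℤ) ∈ W ⊔ L := by
          have hv : (![1, 0, 0] : Fin 3 → ℤ) = ![(n₁ : ℤ), 0, 0] - (k : ℤ) • ![2, 0, 0] := by
            funext i; fin_cases i <;> simp <;> push_cast <;> omega
          rw [hv]
          exact sub_mem (AddSubgroup.mem_sup_right hLn₁)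
            (AddSubgroup.zsmul_mem _ (AddSubgroup.mem_sup_left h2e0) _)
        refine ⟨he0, ?_⟩
        have hv : (![0, 1, 0] : Fin 3 → ℤ) = ![1, 1, 0] - ![1, 0, 0] := by
          funext i; fin_cases i <;> simp
        rw [hv]
        exact sub_mem (AddSubgroup.mem_sup_left hg4) he0
    have hsup : W ⊔ L = ⊤ := by
      rw [eq_top_iff]
      intro v _
      exact mem_of_basis he0.1 he0.2 (AddSubgroup.mem_sup_left hg3) v
    have hodd : Odd (n₁ + n₂ + n₁ * n₂) := by
      rw [← Nat.not_even_iff_odd, Nat.even_add, Nat.even_add, Nat.even_mul]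
      tauto
    rw [hsup, AddSubgroup.index_top, hodd.neg_one_pow]
    norm_num
end
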